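/- arXiv:1712.08279 — 3 statements merged into one kernel-verified Lean document; each statement's English description precedes it below -/
import Mathlib

section
/- (Jensen inequality for sub-linear expectations) Let f be a convex function on ℝ and X a random variable with Ê[X] and Ê[f(X)] finite, where Ê is a sub-linear expectation. Then Ê[f(X)] ≥ f(Ê[X]). -/
/-!
A convex function lies above its supporting line `ℓ x = f m + c * (x - m)` at `m = Ê[X]`.
The expectation `Ê` is monotone, commutes with adding constants, and satisfies
`c * Ê[X] ≤ Ê[c X]` for every real `c` (for `c < 0` by sub-additivity, since
`0 = Ê[c X - c X] ≤ Ê[c X] + Ê[-c X]`). Hence `Ê[f X] ≥ Ê[ℓ X] ≥ ℓ (Ê[X]) = f (Ê[X])`.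
-/

/-- A (real-valued) sub-linear expectation on the space of all random variables `Ω → ℝ`. -/
structure SubLinearExpectation (Ω : Type*) where
  E : (Ω → ℝ) → ℝ
  mono : ∀ ⦃X Y : Ω → ℝ⦄, (∀ ω, X ω ≤ Y ω) → E X ≤ E Y
  constPres : ∀ c : ℝ, E (fun _ => c) = c
  subadd : ∀ X Y : Ω → ℝ, E (fun ω => X ω + Y ω) ≤ E X + E Y
  posHomog : ∀ l : ℝ, 0 ≤ l → ∀ X : Ω → ℝ, E (fun ω => l * X ω) = l * E X

open Set in
lemma ConvexOn.exists_add_mul_sub_le_of_mem_interior {S : Set ℝ} {f : ℝ → ℝ}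
    (hf : ConvexOn ℝ S f) {a : ℝ} (ha : a ∈ interior S) :
    ∃ c : ℝ, ∀ x ∈ S, f a + c * (x - a) ≤ f x := by
  refine ⟨derivWithin f (Ioi a) a, fun x hx => ?_⟩
  rcases lt_trichotomy x a with hxa | rfl | hax
  · have hslope : slope f x a ≤ derivWithin f (Ioi a) a :=
      (hf.slope_le_leftDeriv_of_mem_interior hx ha hxa).trans
        (hf.leftDeriv_le_rightDeriv_of_mem_interior ha)
    rw [slope_def_field, div_le_iff₀ (sub_pos.2 hxa)] at hslope
    linarith
  · simp
  · have hslope := hf.rightDeriv_le_slope_of_mem_interior ha hx hax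
    rw [slope_def_field, le_div_iff₀ (sub_pos.2 hax)] at hslope
    linarith

namespace SubLinearExpectation

variable {Ω : Type*} (sl : SubLinearExpectation Ω)

lemma E_add_const (X : Ω → ℝ) (d : ℝ) : sl.E (fun ω => X ω + d) = sl.E X + d := by
  have hle := sl.subadd X (fun _ => d)
  have hge := sl.subadd (fun ω => X ω + d) (fun _ => -d)
  simp only [sl.constPres, add_neg_cancel_right] at hle hge
  linarith

lemma mul_E_le_E_mul (c : ℝ) (X : Ω → ℝ) : c * sl.E X ≤ sl.E (fun ω => c * X ω) := by
  rcases le_or_gt 0 c with hc | hc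
  · exact (sl.posHomog c hc X).ge
  · have hzero := sl.subadd (fun ω => c * X ω) (fun ω => -c * X ω)
    simp only [← add_mul, add_neg_cancel, zero_mul, sl.constPres,
      sl.posHomog (-c) (neg_nonneg.2 hc.le)] at hzero
    linarith

end SubLinearExpectation

theorem jensen_sublinear {Ω : Type*} (sl : SubLinearExpectation Ω)
    (f : ℝ → ℝ) (hf : ConvexOn ℝ Set.univ f) (X : Ω → ℝ) :
    sl.E (fun ω => f (X ω)) ≥ f (sl.E X) := by
  set m := sl.E X
  obtain ⟨c, hc⟩ := hf.exists_add_mul_sub_le_of_mem_interior (a := m) (by simp)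
  calc f m = c * m + (f m - c * m) := by ring
    _ ≤ sl.E (fun ω => c * X ω) + (f m - c * m) :=
      add_le_add_left (sl.mul_E_le_E_mul c X) _
    _ = sl.E (fun ω => c * X ω + (f m - c * m)) := (sl.E_add_const _ _).symm
    _ ≤ sl.E (fun ω => f (X ω)) := sl.mono fun ω => by linarith [hc (X ω) trivial]
end

section
/- Let X be a random variable in a sub-linear expectation space and 0 < p < 2. If the Choquet integral C_𝕍(|X|^p) = ∫_0^∞ 𝕍(|X|^p ≥ t) dt is finite, then ∑_{n=1}^∞ n^{−2/p} Ê[(|X| ∧ n^{1/p})²] < ∞. -/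
open Filter

/-- The conjugate (lower) expectation `Ẽ[X] := -Ê[-X]`. -/
def conjExpectation {Ω : Type*} (sl : SubLinearExpectation Ω) (X : Ω → ℝ) : ℝ :=
  -sl.E (fun ω => -X ω)

/-- The upper capacity `𝕍(A) = inf { Ê[ξ] : I_A ≤ ξ }`. -/
noncomputable def upperCapacity {Ω : Type*} (sl : SubLinearExpectation Ω) (A : Set Ω) : ℝ :=
  sInf {r : ℝ | ∃ ξ : Ω → ℝ, (∀ ω, A.indicator (fun _ => (1 : ℝ)) ω ≤ ξ ω) ∧ sl.E ξ = r}

open MeasureTheory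

section Aux

variable {Ω : Type*} (sl : SubLinearExpectation Ω)

private lemma E_zero : sl.E (fun _ => (0:ℝ)) = 0 := sl.constPres 0

private lemma E_nonneg {f : Ω → ℝ} (h : ∀ ω, 0 ≤ f ω) : 0 ≤ sl.E f := by
  have h2 := sl.mono (X := fun _ => (0:ℝ)) (Y := f) h
  rwa [sl.constPres] at h2

private lemma E_sum_le (m : ℕ) (f : ℕ → Ω → ℝ) :
    sl.E (fun ω => ∑ i ∈ Finset.range m, f i ω) ≤ ∑ i ∈ Finset.range m, sl.E (f i) := by
  induction m with
  | zero => simp [E_zero]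
  | succ m ih =>
    have e : (fun ω => ∑ i ∈ Finset.range (m+1), f i ω)
        = (fun ω => (∑ i ∈ Finset.range m, f i ω) + f m ω) := by
      funext ω; exact Finset.sum_range_succ _ _
    rw [e, Finset.sum_range_succ]
    exact le_trans (sl.subadd _ _) (add_le_add_left ih _)

private def capSet (A : Set Ω) : Set ℝ :=
  {r : ℝ | ∃ ξ : Ω → ℝ, (∀ ω, A.indicator (fun _ => (1 : ℝ)) ω ≤ ξ ω) ∧ sl.E ξ = r}

private lemma cap_eq (A : Set Ω) : upperCapacity sl A = sInf (capSet sl A) := rfl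

private lemma indicator_le_one' (A : Set Ω) (ω : Ω) :
    A.indicator (fun _ => (1:ℝ)) ω ≤ 1 := by
  classical
  by_cases h : ω ∈ A <;> simp [Set.indicator_apply, h]

private lemma indicator_nonneg' (A : Set Ω) (ω : Ω) :
    0 ≤ A.indicator (fun _ => (1:ℝ)) ω :=
  Set.indicator_nonneg (fun _ _ => zero_le_one) ω

private lemma capSet_nonempty (A : Set Ω) : (capSet sl A).Nonempty :=
  ⟨sl.E (fun _ => 1), fun _ => 1, fun ω => indicator_le_one' A ω, rfl⟩

private lemma capSet_bddBelow (A : Set Ω) : BddBelow (capSet sl A) := by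
  refine ⟨0, ?_⟩
  rintro r ⟨ξ, hξ, rfl⟩
  exact E_nonneg sl (fun ω => (indicator_nonneg' A ω).trans (hξ ω))

private lemma cap_nonneg (A : Set Ω) : 0 ≤ upperCapacity sl A := by
  rw [cap_eq]
  refine le_csInf (capSet_nonempty sl A) ?_
  rintro r ⟨ξ, hξ, rfl⟩
  exact E_nonneg sl (fun ω => (indicator_nonneg' A ω).trans (hξ ω))

private lemma cap_le_one (A : Set Ω) : upperCapacity sl A ≤ 1 := by
  rw [cap_eq]
  refine csInf_le (capSet_bddBelow sl A) ?_
  exact ⟨fun _ => 1, fun ω => indicator_le_one' A ω, sl.constPres 1⟩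

private lemma cap_mono {A B : Set Ω} (h : A ⊆ B) :
    upperCapacity sl A ≤ upperCapacity sl B := by
  rw [cap_eq, cap_eq]
  refine csInf_le_csInf (capSet_bddBelow sl A) (capSet_nonempty sl B) ?_
  rintro r ⟨ξ, hξ, rfl⟩
  exact ⟨ξ, fun ω =>
    le_trans (Set.indicator_le_indicator_of_subset h (fun _ => zero_le_one) ω) (hξ ω), rfl⟩

private lemma cap_exists_lt (A : Set Ω) {ε : ℝ} (hε : 0 < ε) :
    ∃ ξ : Ω → ℝ, (∀ ω, A.indicator (fun _ => (1 : ℝ)) ω ≤ ξ ω) ∧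
      sl.E ξ < upperCapacity sl A + ε := by
  obtain ⟨r, hr, hlt⟩ := Real.lt_sInf_add_pos (capSet_nonempty sl A) hε
  obtain ⟨ξ, hξ, rfl⟩ := hr
  exact ⟨ξ, hξ, hlt⟩

private lemma c_nonneg {q : ℝ} (hq : 0 ≤ q) (k : ℕ) :
    0 ≤ ((k:ℝ)+1)^q - (k:ℝ)^q :=
  sub_nonneg.mpr (Real.rpow_le_rpow (Nat.cast_nonneg k) (by linarith) hq)

/-- `(k+1)^q - k^q ≤ q * (k+1)^(q-1)` for `q ≥ 1`. -/
private lemma rpow_diff_le {q : ℝ} (hq : 1 ≤ q) (k : ℕ) :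
    ((k:ℝ)+1)^q - (k:ℝ)^q ≤ q * ((k:ℝ)+1)^(q-1) := by
  have hk1 : (0:ℝ) < (k:ℝ)+1 := by positivity
  have hs : (-1:ℝ) ≤ -(((k:ℝ)+1)⁻¹) := by
    have h1 : ((k:ℝ)+1)⁻¹ ≤ 1 := by
      rw [inv_le_one_iff₀]; right; linarith
    linarith
  have hb := one_add_mul_self_le_rpow_one_add hs hq
  have he : 1 + (-(((k:ℝ)+1)⁻¹)) = (k:ℝ)/((k:ℝ)+1) := by
    field_simp; ring
  rw [he] at hb
  have hD : (0:ℝ) < ((k:ℝ)+1)^q := Real.rpow_pos_of_pos hk1 q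
  have h3 := mul_le_mul_of_nonneg_right hb hD.le
  have h4 : ((k:ℝ)/((k:ℝ)+1))^q * ((k:ℝ)+1)^q = (k:ℝ)^q := by
    rw [← Real.mul_rpow (by positivity) hk1.le, div_mul_cancel₀ _ (ne_of_gt hk1)]
  rw [h4] at h3
  have h5 : ((k:ℝ)+1)^(q-1) = ((k:ℝ)+1)^q / ((k:ℝ)+1) :=
    Real.rpow_sub_one (ne_of_gt hk1) q
  have h6 : (1 + q * -(((k:ℝ)+1)⁻¹)) * (((k:ℝ)+1)^q)
      = ((k:ℝ)+1)^q - q * (((k:ℝ)+1)^q / ((k:ℝ)+1)) := by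
    field_simp; ring
  rw [h6] at h3
  rw [h5]
  linarith

/-- `((n+1)^q)⁻¹ ≤ (2^q/(q-1)) * (((n+1)^(q-1))⁻¹ - ((n+2)^(q-1))⁻¹)` for `q > 1`. -/
private lemma inv_rpow_succ_le {q : ℝ} (hq : 1 < q) (n : ℕ) :
    (((n:ℝ)+1)^q)⁻¹ ≤ (2^q/(q-1)) * ((((n:ℝ)+1)^(q-1))⁻¹ - (((n:ℝ)+2)^(q-1))⁻¹) := by
  set a : ℝ := (n:ℝ)+1 with ha
  set b : ℝ := (n:ℝ)+2 with hbdef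
  have ha0 : 0 < a := by rw [ha]; positivity
  have hb0 : 0 < b := by rw [hbdef]; positivity
  have hab : b = a + 1 := by rw [ha, hbdef]; ring
  have hr : 0 < q - 1 := by linarith
  -- Bernoulli : (1 + 1/a)^q ≥ 1 + q/a
  have hs : (-1:ℝ) ≤ a⁻¹ := le_trans (by norm_num) (inv_nonneg.mpr ha0.le)
  have hber := one_add_mul_self_le_rpow_one_add hs hq.le
  have he : 1 + a⁻¹ = b / a := by rw [hab]; field_simp
  rw [he] at hber
  have hdiv : (b/a)^q = b^q / a^q := Real.div_rpow hb0.le ha0.le q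
  rw [hdiv] at hber
  have hAq : (0:ℝ) < a^q := Real.rpow_pos_of_pos ha0 q
  have hBq : (0:ℝ) < b^q := Real.rpow_pos_of_pos hb0 q
  have hA : (0:ℝ) < a^(q-1) := Real.rpow_pos_of_pos ha0 _
  have hB : (0:ℝ) < b^(q-1) := Real.rpow_pos_of_pos hb0 _
  have haq : a^(q-1) = a^q / a := Real.rpow_sub_one (ne_of_gt ha0) q
  have hbq : b^(q-1) = b^q / b := Real.rpow_sub_one (ne_of_gt hb0) q
  -- key : a^(q-1) * (b + (q-1)) ≤ b^q
  have hkey : a^(q-1) * (b + (q-1)) ≤ b^q := by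
    have h1 := mul_le_mul_of_nonneg_right hber hAq.le
    have h2 : b^q / a^q * a^q = b^q := div_mul_cancel₀ _ (ne_of_gt hAq)
    rw [h2] at h1
    have h3 : (1 + q * a⁻¹) * a^q = a^q + q * (a^q / a) := by field_simp
    rw [h3, ← haq] at h1
    have h4 : a^(q-1) * (b + (q-1)) = a^(q-1) * a + q * a^(q-1) := by
      rw [hab]; ring
    have h5 : a^(q-1) * a = a^q := by rw [haq, div_mul_cancel₀ _ (ne_of_gt ha0)]
    rw [h4, h5]
    linarith
  -- step 1 : (q-1) * (b^q)⁻¹ ≤ (a^(q-1))⁻¹ - (b^(q-1))⁻¹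
  have hstep1 : (q-1) * (b^q)⁻¹ ≤ (a^(q-1))⁻¹ - (b^(q-1))⁻¹ := by
    have hba : a^(q-1) * (q-1) ≤ b * (b^(q-1) - a^(q-1)) := by
      have : b * b^(q-1) = b^q := by rw [hbq]; field_simp
      nlinarith [hkey]
    have e1 : (a^(q-1))⁻¹ - (b^(q-1))⁻¹ = (b^(q-1) - a^(q-1)) / (a^(q-1) * b^(q-1)) := by
      field_simp
    have e2 : (q-1) * (b^q)⁻¹ = (q-1) / (b^(q-1) * b) := by
      rw [hbq]; field_simp
    rw [e1, e2, div_le_div_iff₀ (by positivity) (by positivity)]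
    nlinarith [mul_le_mul_of_nonneg_right hba hB.le, hA, hB, hb0]
  -- step 2 : (a^q)⁻¹ ≤ 2^q * (b^q)⁻¹
  have hstep2 : (a^q)⁻¹ ≤ 2^q * (b^q)⁻¹ := by
    have hb2a : b ≤ 2*a := by rw [hab]; linarith
    have : b^q ≤ (2*a)^q := Real.rpow_le_rpow hb0.le hb2a (by linarith)
    have h2a : ((2:ℝ)*a)^q = 2^q * a^q := Real.mul_rpow (by norm_num) ha0.le
    rw [h2a] at this
    have h2 : (a^q)⁻¹ = 1 / a^q := (one_div _).symm
    have h3 : (2:ℝ)^q * (b^q)⁻¹ = 2^q / b^q := (div_eq_mul_inv _ _).symm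
    rw [h2, h3, div_le_div_iff₀ hAq hBq, one_mul]
    exact this
  calc (a^q)⁻¹ ≤ 2^q * (b^q)⁻¹ := hstep2
    _ = (2^q/(q-1)) * ((q-1) * (b^q)⁻¹) := by field_simp
    _ ≤ (2^q/(q-1)) * ((a^(q-1))⁻¹ - (b^(q-1))⁻¹) := by
        apply mul_le_mul_of_nonneg_left hstep1
          (div_pos (Real.rpow_pos_of_pos two_pos q) hr).le

/-- Pointwise bound : `(min z (n+1))^q ≤ ∑_{k≤n} ((k+1)^q - k^q) · 1_{k ≤ z}`. -/
private lemma pointwise_sum_bound {q : ℝ} (hq : 1 ≤ q) (n : ℕ) {z : ℝ} (hz : 0 ≤ z) :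
    (min z ((n:ℝ)+1)) ^ q ≤
      ∑ k ∈ Finset.range (n+1),
        ((((k:ℝ)+1)^q - (k:ℝ)^q) * (if (k:ℝ) ≤ z then (1:ℝ) else 0)) := by
  set w := min z ((n:ℝ)+1) with hw
  have hw0 : 0 ≤ w := le_min hz (by positivity)
  set j := min ⌊w⌋₊ n with hj
  have hjn : j ≤ n := min_le_right _ _
  have hwle : w ≤ (j:ℝ) + 1 := by
    rcases le_or_gt ⌊w⌋₊ n with h | h
    · have hje : j = ⌊w⌋₊ := min_eq_left h
      rw [hje]; exact (Nat.lt_floor_add_one w).le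
    · have hje : j = n := min_eq_right h.le
      rw [hje]; exact min_le_right _ _
  have hjz : (j:ℝ) ≤ z := by
    have h1 : (j:ℝ) ≤ (⌊w⌋₊:ℝ) := Nat.cast_le.mpr (min_le_left _ _)
    exact h1.trans ((Nat.floor_le hw0).trans (min_le_left _ _))
  have hq0 : 0 ≤ q := le_trans zero_le_one hq
  have hsum_sub : ∑ k ∈ Finset.range (j+1), (((k:ℝ)+1)^q - (k:ℝ)^q) = ((j:ℝ)+1)^q := by
    have h := Finset.sum_range_sub (f := fun k : ℕ => ((k:ℝ))^q) (j+1)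
    have he : ∀ i : ℕ, ((i:ℝ)+1)^q - (i:ℝ)^q
        = (fun k : ℕ => ((k:ℝ))^q) (i+1) - (fun k : ℕ => ((k:ℝ))^q) i := by
      intro i; push_cast; ring
    calc ∑ k ∈ Finset.range (j+1), (((k:ℝ)+1)^q - (k:ℝ)^q)
        = ∑ k ∈ Finset.range (j+1),
            ((fun k : ℕ => ((k:ℝ))^q) (k+1) - (fun k : ℕ => ((k:ℝ))^q) k) :=
          Finset.sum_congr rfl (fun k _ => he k)
      _ = ((j+1:ℕ):ℝ)^q - ((0:ℕ):ℝ)^q := h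
      _ = ((j:ℝ)+1)^q := by
          push_cast
          rw [Real.zero_rpow (by linarith : q ≠ 0)]
          ring
  calc w ^ q ≤ (((j:ℝ)+1)) ^ q := Real.rpow_le_rpow hw0 hwle hq0
    _ = ∑ k ∈ Finset.range (j+1), (((k:ℝ)+1)^q - (k:ℝ)^q) := hsum_sub.symm
    _ = ∑ k ∈ Finset.range (j+1),
          ((((k:ℝ)+1)^q - (k:ℝ)^q) * (if (k:ℝ) ≤ z then (1:ℝ) else 0)) := by
        refine Finset.sum_congr rfl (fun k hk => ?_)
        have hkj : (k:ℝ) ≤ (j:ℝ) := by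
          have := Nat.lt_succ_iff.mp (Finset.mem_range.mp hk)
          exact_mod_cast this
        rw [if_pos (hkj.trans hjz), mul_one]
    _ ≤ ∑ k ∈ Finset.range (n+1),
          ((((k:ℝ)+1)^q - (k:ℝ)^q) * (if (k:ℝ) ≤ z then (1:ℝ) else 0)) := by
        refine Finset.sum_le_sum_of_subset_of_nonneg
          (Finset.range_subset_range.mpr (by omega)) (fun k _ _ => ?_)
        refine mul_nonneg (c_nonneg hq0 k) ?_
        split <;> norm_num

/-- Main expectation bound : `Ê[(Z ∧ (n+1))^q] ≤ ∑_{k≤n} ((k+1)^q - k^q) 𝕍(Z ≥ k)`. -/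
private lemma E_trunc_le {q : ℝ} (hq : 1 ≤ q) (Z : Ω → ℝ) (hZ : ∀ ω, 0 ≤ Z ω) (n : ℕ) :
    sl.E (fun ω => (min (Z ω) ((n:ℝ)+1)) ^ q) ≤
      ∑ k ∈ Finset.range (n+1),
        ((((k:ℝ)+1)^q - (k:ℝ)^q) * upperCapacity sl {ω | Z ω ≥ (k:ℝ)}) := by
  classical
  have hq0 : 0 ≤ q := le_trans zero_le_one hq
  refine le_of_forall_pos_le_add (fun ε hε => ?_)
  have hS0 : 0 ≤ ∑ k ∈ Finset.range (n+1), (((k:ℝ)+1)^q - (k:ℝ)^q) :=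
    Finset.sum_nonneg fun k _ => c_nonneg hq0 k
  set S : ℝ := ∑ k ∈ Finset.range (n+1), (((k:ℝ)+1)^q - (k:ℝ)^q) with hSdef
  set δ : ℝ := ε / (S + 1) with hδdef
  have hδ0 : 0 < δ := by rw [hδdef]; positivity
  have hchoice : ∀ k : ℕ, ∃ ξ : Ω → ℝ,
      (∀ ω, ({ω | Z ω ≥ (k:ℝ)} : Set Ω).indicator (fun _ => (1:ℝ)) ω ≤ ξ ω) ∧
      sl.E ξ < upperCapacity sl {ω | Z ω ≥ (k:ℝ)} + δ :=
    fun k => cap_exists_lt sl _ hδ0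
  choose ξ hξ hξE using hchoice
  have hpt : ∀ ω, (min (Z ω) ((n:ℝ)+1)) ^ q
      ≤ ∑ k ∈ Finset.range (n+1), (((k:ℝ)+1)^q - (k:ℝ)^q) * ξ k ω := by
    intro ω
    refine le_trans (pointwise_sum_bound hq n (hZ ω)) (Finset.sum_le_sum fun k _ => ?_)
    have hind : (if (k:ℝ) ≤ Z ω then (1:ℝ) else 0) ≤ ξ k ω := by
      by_cases h : (k:ℝ) ≤ Z ω
      · rw [if_pos h]
        have := hξ k ω
        rwa [Set.indicator_of_mem (by exact h : ω ∈ {ω | Z ω ≥ (k:ℝ)})] at this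
      · rw [if_neg h]
        exact le_trans (indicator_nonneg' _ ω) (hξ k ω)
    exact mul_le_mul_of_nonneg_left hind (c_nonneg hq0 k)
  calc sl.E (fun ω => (min (Z ω) ((n:ℝ)+1)) ^ q)
      ≤ sl.E (fun ω => ∑ k ∈ Finset.range (n+1), (((k:ℝ)+1)^q - (k:ℝ)^q) * ξ k ω) :=
        sl.mono hpt
    _ ≤ ∑ k ∈ Finset.range (n+1), sl.E (fun ω => (((k:ℝ)+1)^q - (k:ℝ)^q) * ξ k ω) :=
        E_sum_le sl _ _
    _ = ∑ k ∈ Finset.range (n+1), (((k:ℝ)+1)^q - (k:ℝ)^q) * sl.E (ξ k) :=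
        Finset.sum_congr rfl fun k _ => sl.posHomog _ (c_nonneg hq0 k) (ξ k)
    _ ≤ ∑ k ∈ Finset.range (n+1),
          (((k:ℝ)+1)^q - (k:ℝ)^q) * (upperCapacity sl {ω | Z ω ≥ (k:ℝ)} + δ) :=
        Finset.sum_le_sum fun k _ => mul_le_mul_of_nonneg_left (hξE k).le (c_nonneg hq0 k)
    _ = (∑ k ∈ Finset.range (n+1),
          (((k:ℝ)+1)^q - (k:ℝ)^q) * upperCapacity sl {ω | Z ω ≥ (k:ℝ)}) + S * δ := by
        rw [hSdef, Finset.sum_mul]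
        rw [← Finset.sum_add_distrib]
        exact Finset.sum_congr rfl fun k _ => by ring
    _ ≤ (∑ k ∈ Finset.range (n+1),
          (((k:ℝ)+1)^q - (k:ℝ)^q) * upperCapacity sl {ω | Z ω ≥ (k:ℝ)}) + ε := by
        have : S * δ ≤ ε := by
          rw [hδdef, mul_div_assoc']
          rw [div_le_iff₀ (by linarith)]
          nlinarith
        linarith

/-- The purely combinatorial summability step. -/
private lemma final_summable {q : ℝ} (hq : 1 < q) (v : ℕ → ℝ) (hv0 : ∀ k, 0 ≤ v k)
    {M : ℝ} (hvb : ∀ N, ∑ k ∈ Finset.range N, v k ≤ M)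
    (f : ℕ → ℝ) (hf0 : ∀ n, 0 ≤ f n)
    (hfle : ∀ n, f n ≤ (∑ k ∈ Finset.range (n+1), ((((k:ℝ)+1)^q - (k:ℝ)^q) * v k))
      * ((((n:ℝ)+1)^q)⁻¹)) :
    Summable f := by
  have hq0 : (0:ℝ) ≤ q := by linarith
  have hCq : (0:ℝ) < 2^q/(q-1) := div_pos (Real.rpow_pos_of_pos two_pos q) (by linarith)
  have hM : 0 ≤ M := by simpa using hvb 0
  -- tail estimate
  have htail : ∀ k N : ℕ, ∑ n ∈ Finset.Ico k N, ((((n:ℝ)+1)^q)⁻¹)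
      ≤ (2^q/(q-1)) * ((((k:ℝ)+1)^(q-1))⁻¹) := by
    intro k N
    have h1 : ∑ n ∈ Finset.Ico k N, ((((n:ℝ)+1)^q)⁻¹)
        ≤ ∑ n ∈ Finset.Ico k N,
            (2^q/(q-1)) * ((((n:ℝ)+1)^(q-1))⁻¹ - (((n:ℝ)+2)^(q-1))⁻¹) :=
      Finset.sum_le_sum fun n _ => inv_rpow_succ_le hq n
    rw [← Finset.mul_sum] at h1
    refine h1.trans (mul_le_mul_of_nonneg_left ?_ hCq.le)
    -- telescoping
    rcases le_or_gt k N with hkN | hkN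
    · have he : ∀ n : ℕ, (((n:ℝ)+1)^(q-1))⁻¹ - (((n:ℝ)+2)^(q-1))⁻¹
          = (fun m : ℕ => ((((m:ℝ)+1)^(q-1))⁻¹)) n - (fun m : ℕ => ((((m:ℝ)+1)^(q-1))⁻¹)) (n+1) := by
        intro n
        have e : ((n+1:ℕ):ℝ) + 1 = (n:ℝ) + 2 := by push_cast; ring
        simp only [e]
      calc ∑ n ∈ Finset.Ico k N, ((((n:ℝ)+1)^(q-1))⁻¹ - (((n:ℝ)+2)^(q-1))⁻¹)
          = ∑ i ∈ Finset.range (N - k),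
              ((fun m : ℕ => ((((m:ℝ)+1)^(q-1))⁻¹)) (k+i)
                - (fun m : ℕ => ((((m:ℝ)+1)^(q-1))⁻¹)) (k+i+1)) := by
            rw [Finset.sum_Ico_eq_sum_range]
            exact Finset.sum_congr rfl fun i _ => he (k+i)
        _ = (((k:ℝ)+1)^(q-1))⁻¹ - ((((k + (N-k):ℕ):ℝ)+1)^(q-1))⁻¹ :=
            Finset.sum_range_sub' (fun i => ((((k+i:ℕ):ℝ)+1)^(q-1))⁻¹) (N-k)
        _ ≤ (((k:ℝ)+1)^(q-1))⁻¹ := by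
            have : (0:ℝ) ≤ ((((k + (N-k):ℕ):ℝ)+1)^(q-1))⁻¹ := by positivity
            linarith
    · rw [Finset.Ico_eq_empty (by omega), Finset.sum_empty]
      positivity
  refine summable_of_sum_range_le (c := (q * (2^q/(q-1))) * M) hf0 ?_
  intro N
  have hbd : ∀ n : ℕ, f n ≤ ∑ k ∈ Finset.range (n+1),
      ((((k:ℝ)+1)^q - (k:ℝ)^q) * v k) * ((((n:ℝ)+1)^q)⁻¹) := by
    intro n
    refine (hfle n).trans (le_of_eq ?_)
    rw [Finset.sum_mul]
  calc ∑ n ∈ Finset.range N, f n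
      ≤ ∑ n ∈ Finset.range N, ∑ k ∈ Finset.range (n+1),
          ((((k:ℝ)+1)^q - (k:ℝ)^q) * v k) * ((((n:ℝ)+1)^q)⁻¹) :=
        Finset.sum_le_sum fun n _ => hbd n
    _ = ∑ k ∈ Finset.range N, ∑ n ∈ Finset.Ico k N,
          ((((k:ℝ)+1)^q - (k:ℝ)^q) * v k) * ((((n:ℝ)+1)^q)⁻¹) := by
        simp only [Finset.range_eq_Ico]
        exact (Finset.sum_Ico_Ico_comm 0 N _).symm
    _ = ∑ k ∈ Finset.range N,
          ((((k:ℝ)+1)^q - (k:ℝ)^q) * v k) * (∑ n ∈ Finset.Ico k N, ((((n:ℝ)+1)^q)⁻¹)) := by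
        exact Finset.sum_congr rfl fun k _ => (Finset.mul_sum _ _ _).symm
    _ ≤ ∑ k ∈ Finset.range N,
          ((((k:ℝ)+1)^q - (k:ℝ)^q) * v k) * ((2^q/(q-1)) * ((((k:ℝ)+1)^(q-1))⁻¹)) :=
        Finset.sum_le_sum fun k _ => mul_le_mul_of_nonneg_left (htail k N)
          (mul_nonneg (c_nonneg hq0 k) (hv0 k))
    _ ≤ ∑ k ∈ Finset.range N,
          (q * ((k:ℝ)+1)^(q-1) * v k) * ((2^q/(q-1)) * ((((k:ℝ)+1)^(q-1))⁻¹)) := by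
        refine Finset.sum_le_sum fun k _ => ?_
        refine mul_le_mul_of_nonneg_right ?_ ?_
        · exact mul_le_mul_of_nonneg_right (rpow_diff_le hq.le k) (hv0 k)
        · exact mul_nonneg hCq.le (by positivity)
    _ = ∑ k ∈ Finset.range N, (q * (2^q/(q-1))) * v k := by
        refine Finset.sum_congr rfl fun k _ => ?_
        have hP : ((k:ℝ)+1)^(q-1) ≠ 0 :=
          ne_of_gt (Real.rpow_pos_of_pos (by positivity) _)
        rw [show (q * ((k:ℝ)+1)^(q-1) * v k) * ((2^q/(q-1)) * ((((k:ℝ)+1)^(q-1))⁻¹))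
            = ((q * (2^q/(q-1))) * v k) * (((k:ℝ)+1)^(q-1) * ((((k:ℝ)+1)^(q-1))⁻¹)) by ring,
          mul_inv_cancel₀ hP, mul_one]
    _ = (q * (2^q/(q-1))) * ∑ k ∈ Finset.range N, v k := (Finset.mul_sum _ _ _).symm
    _ ≤ (q * (2^q/(q-1))) * M :=
        mul_le_mul_of_nonneg_left (hvb N) (mul_nonneg (by linarith) hCq.le)

end Aux

theorem truncated_second_moment_series {Ω : Type*} (sl : SubLinearExpectation Ω)
    (X : Ω → ℝ) (p : ℝ) (hp0 : 0 < p) (hp2 : p < 2)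
    (hChoquet : (∫⁻ t in Set.Ioi (0 : ℝ),
      ENNReal.ofReal (upperCapacity sl {ω | |X ω| ^ p ≥ t})) < ⊤) :
    Summable (fun n : ℕ =>
      sl.E (fun ω => (min |X ω| (((n : ℝ) + 1) ^ (1 / p))) ^ 2) / ((n : ℝ) + 1) ^ (2 / p)) := by
  classical
  have hq1 : 1 < 2/p := (one_lt_div hp0).mpr hp2
  set I : ENNReal := ∫⁻ t in Set.Ioi (0 : ℝ),
      ENNReal.ofReal (upperCapacity sl {ω | |X ω| ^ p ≥ t}) with hIdef
  have hIne : I ≠ ⊤ := hChoquet.ne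
  set v : ℕ → ℝ := fun k => upperCapacity sl {ω | |X ω| ^ p ≥ ((k:ℕ):ℝ)} with hvdef
  have hv0 : ∀ k, 0 ≤ v k := fun k => cap_nonneg sl _
  -- partial sums of v are bounded
  have hstep : ∀ k : ℕ, ENNReal.ofReal (v (k+1)) ≤
      ∫⁻ t in Set.Ioc ((k:ℝ)) ((k:ℝ)+1),
        ENNReal.ofReal (upperCapacity sl {ω | |X ω| ^ p ≥ t}) := by
    intro k
    have hvol : volume (Set.Ioc ((k:ℝ)) ((k:ℝ)+1)) = 1 := by
      rw [Real.volume_Ioc]; norm_num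
    have hmono : ∀ t ∈ Set.Ioc ((k:ℝ)) ((k:ℝ)+1),
        ENNReal.ofReal (v (k+1)) ≤
          ENNReal.ofReal (upperCapacity sl {ω | |X ω| ^ p ≥ t}) := by
      intro t ht
      apply ENNReal.ofReal_le_ofReal
      apply cap_mono
      intro ω hω
      have hω' : (((k+1:ℕ)):ℝ) ≤ |X ω| ^ p := hω
      have : t ≤ ((k+1:ℕ):ℝ) := by push_cast; exact_mod_cast ht.2
      exact le_trans this hω'
    calc ENNReal.ofReal (v (k+1))
        = ENNReal.ofReal (v (k+1)) * volume (Set.Ioc ((k:ℝ)) ((k:ℝ)+1)) := by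
          rw [hvol, mul_one]
      _ = ∫⁻ _ in Set.Ioc ((k:ℝ)) ((k:ℝ)+1), ENNReal.ofReal (v (k+1)) :=
          (setLIntegral_const _ _).symm
      _ ≤ _ := setLIntegral_mono' measurableSet_Ioc hmono
  have hsplit : ∀ N : ℕ,
      ∑ k ∈ Finset.range N, (∫⁻ t in Set.Ioc ((k:ℝ)) ((k:ℝ)+1),
        ENNReal.ofReal (upperCapacity sl {ω | |X ω| ^ p ≥ t})) ≤ I := by
    intro N
    have heq : ∑ k ∈ Finset.range N, (∫⁻ t in Set.Ioc ((k:ℝ)) ((k:ℝ)+1),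
        ENNReal.ofReal (upperCapacity sl {ω | |X ω| ^ p ≥ t}))
        = ∫⁻ t in Set.Ioc (0:ℝ) ((N:ℕ):ℝ),
            ENNReal.ofReal (upperCapacity sl {ω | |X ω| ^ p ≥ t}) := by
      induction N with
      | zero => simp
      | succ N ih =>
        rw [Finset.sum_range_succ, ih]
        rw [← lintegral_union measurableSet_Ioc (Set.Ioc_disjoint_Ioc_of_le le_rfl)]
        have hU : Set.Ioc (0:ℝ) ((N:ℕ):ℝ) ∪ Set.Ioc ((N:ℝ)) ((N:ℝ)+1)
            = Set.Ioc (0:ℝ) (((N+1:ℕ)):ℝ) := by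
          rw [Set.Ioc_union_Ioc_eq_Ioc (by positivity) (by linarith)]
          norm_num
        rw [hU]
    rw [heq]
    exact lintegral_mono_set Set.Ioc_subset_Ioi_self
  have hvb : ∀ N : ℕ, ∑ k ∈ Finset.range N, v k ≤ 1 + I.toReal := by
    have hvN : ∀ N : ℕ, ∑ k ∈ Finset.range N, v (k+1) ≤ I.toReal := by
      intro N
      have h1 : ENNReal.ofReal (∑ k ∈ Finset.range N, v (k+1)) ≤ I := by
        rw [ENNReal.ofReal_sum_of_nonneg (fun k _ => hv0 (k+1))]
        exact le_trans (Finset.sum_le_sum fun k _ => hstep k) (hsplit N)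
      exact (ENNReal.ofReal_le_iff_le_toReal hIne).mp h1
    intro N
    cases N with
    | zero =>
      simp only [Finset.range_zero, Finset.sum_empty]
      have : (0:ℝ) ≤ I.toReal := ENNReal.toReal_nonneg
      linarith
    | succ N =>
      rw [Finset.sum_range_succ']
      have h1 := hvN N
      have h2 : v 0 ≤ 1 := cap_le_one sl _
      linarith
  -- rewrite the summand
  have hrw : ∀ (n : ℕ) (ω : Ω), (min |X ω| (((n : ℝ) + 1) ^ (1 / p))) ^ 2
      = (min (|X ω| ^ p) ((n:ℝ)+1)) ^ (2/p) := by
    intro n ω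
    have habs : (|X ω| ^ p) ^ (1/p) = |X ω| := by
      rw [← Real.rpow_mul (abs_nonneg _), mul_one_div, div_self (ne_of_gt hp0),
        Real.rpow_one]
    have hmin : min |X ω| (((n : ℝ) + 1) ^ (1 / p))
        = (min (|X ω| ^ p) ((n:ℝ)+1)) ^ (1/p) := by
      rcases le_total (|X ω| ^ p) ((n:ℝ)+1) with h | h
      · rw [min_eq_left h, habs]
        refine min_eq_left ?_
        calc |X ω| = (|X ω| ^ p) ^ (1/p) := habs.symm
          _ ≤ ((n:ℝ)+1) ^ (1/p) :=
            Real.rpow_le_rpow (Real.rpow_nonneg (abs_nonneg _) p) h (by positivity)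
      · rw [min_eq_right h]
        refine min_eq_right ?_
        calc ((n:ℝ)+1) ^ (1/p) ≤ (|X ω| ^ p) ^ (1/p) :=
            Real.rpow_le_rpow (by positivity) h (by positivity)
          _ = |X ω| := habs
    rw [hmin, ← Real.rpow_natCast ((min (|X ω| ^ p) ((n:ℝ)+1)) ^ (1/p)) 2,
      ← Real.rpow_mul (le_min (Real.rpow_nonneg (abs_nonneg _) p) (by positivity))]
    congr 1
    push_cast
    ring
  -- apply the combinatorial lemma
  refine final_summable hq1 v hv0 hvb _ ?_ ?_
  · intro n
    refine div_nonneg (E_nonneg sl fun ω => ?_) (by positivity)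
    positivity
  · intro n
    rw [div_eq_mul_inv]
    refine mul_le_mul_of_nonneg_right ?_ (by positivity)
    have h1 : sl.E (fun ω => (min |X ω| (((n : ℝ) + 1) ^ (1 / p))) ^ 2)
        = sl.E (fun ω => (min (|X ω| ^ p) ((n:ℝ)+1)) ^ (2/p)) := by
      congr 1; funext ω; exact hrw n ω
    rw [h1]
    exact E_trunc_le sl hq1.le (fun ω => |X ω| ^ p)
      (fun ω => Real.rpow_nonneg (abs_nonneg _) p) n
end

section
/- Let X be a random variable in a sub-linear expectation space with Ê[X] = 0 and 1 < p < 2, and set Y_n = (−n^{1/p}) ∨ (X ∧ n^{1/p}). Assuming Ê[(|X|−a)^+] ≤ ∫_a^∞ 𝕍(|X| ≥ x) dx for all a > 0, one has ∑_{n=1}^∞ n^{−1/p} |Ê[Y_n]| ≤ 1/(p−1) · C_𝕍(|X|^p); in particular the series ∑ Ê[Y_n]/n^{1/p} converges absolutely whenever C_𝕍(|X|^p) < ∞. -/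
open Filter

open MeasureTheory

/-- Bernoulli-type step inequality. -/
lemma bern_step {θ : ℝ} (hθ0 : 0 < θ) (hθ1 : θ ≤ 1) (m : ℕ) :
    (m:ℝ)^θ + θ * ((m:ℝ)+1)^(θ-1) ≤ ((m:ℝ)+1)^θ := by
  set M : ℝ := (m:ℝ)+1 with hMdef
  have hm0 : (0:ℝ) ≤ (m:ℝ) := Nat.cast_nonneg m
  have hM1 : 1 ≤ M := by simp only [hMdef]; linarith
  have hM0 : (0:ℝ) < M := by linarith
  have hs : (-1:ℝ) ≤ -(1/M) := by
    have : 1/M ≤ 1 := by rw [div_le_one hM0]; exact hM1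
    linarith
  have hb := rpow_one_add_le_one_add_mul_self hs hθ0.le hθ1
  have h1 : (1 : ℝ) + -(1/M) = (M - 1)/M := by field_simp; ring
  have hMθ : (0:ℝ) < M ^ θ := Real.rpow_pos_of_pos hM0 θ
  have h2 : ((M-1)/M) ^ θ * M ^ θ = (M-1) ^ θ := by
    rw [← Real.mul_rpow (div_nonneg (by linarith) hM0.le) hM0.le,
      div_mul_cancel₀ _ hM0.ne']
  have h3 : M ^ θ / M = M ^ (θ - 1) := (Real.rpow_sub_one hM0.ne' θ).symm
  have key : (M-1)^θ ≤ M^θ - θ * M^(θ-1) := by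
    have hmul := mul_le_mul_of_nonneg_right hb hMθ.le
    rw [h1, h2] at hmul
    have hr : (1 + θ * -(1/M)) * M^θ = M^θ - θ * M^(θ-1) := by
      rw [← h3]; field_simp; ring
    linarith [hr ▸ hmul]
  have hmM : (m:ℝ) = M - 1 := by rw [hMdef]; ring
  rw [hmM]; linarith

/-- Partial sums of `(k+1)^(θ-1)` are bounded by `m^θ/θ`. -/
lemma sum_rpow_le {θ : ℝ} (hθ0 : 0 < θ) (hθ1 : θ ≤ 1) :
    ∀ m : ℕ, ∑ k ∈ Finset.range m, ((k:ℝ)+1)^(θ-1) ≤ (1/θ) * (m:ℝ)^θ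
  | 0 => by simp [Real.zero_rpow hθ0.ne']
  | (m+1) => by
    rw [Finset.sum_range_succ]
    have ih := sum_rpow_le hθ0 hθ1 m
    have hb := bern_step hθ0 hθ1 m
    have hcast : ((m+1 : ℕ) : ℝ) = (m:ℝ)+1 := by push_cast; ring
    rw [hcast]
    have h4 := mul_le_mul_of_nonneg_left hb (le_of_lt (one_div_pos.mpr hθ0))
    have h5 : 1/θ * ((m:ℝ)^θ + θ*((m:ℝ)+1)^(θ-1))
        = 1/θ*(m:ℝ)^θ + ((m:ℝ)+1)^(θ-1) := by field_simp
    linarith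

lemma upperCapacity_nonneg {Ω : Type*} (sl : SubLinearExpectation Ω) (A : Set Ω) :
    0 ≤ upperCapacity sl A := by
  apply le_csInf
  · exact ⟨sl.E (fun _ => 1), fun _ => 1,
      fun ω => by by_cases h : ω ∈ A <;> simp [Set.indicator_apply, h], rfl⟩
  · rintro r ⟨ξ, hξ, rfl⟩
    have h0 : ∀ ω, (fun _ => (0:ℝ)) ω ≤ ξ ω := fun ω =>
      le_trans (Set.indicator_nonneg (fun _ _ => zero_le_one) ω) (hξ ω)
    calc (0:ℝ) = sl.E (fun _ => 0) := (sl.constPres 0).symm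
      _ ≤ sl.E ξ := sl.mono h0

theorem truncated_mean_series_large_p {Ω : Type*} (sl : SubLinearExpectation Ω)
    (X : Ω → ℝ) (hmean : sl.E X = 0) (p : ℝ) (hp1 : 1 < p) (hp2 : p < 2)
    (Y : ℕ → Ω → ℝ)
    (hY : ∀ n : ℕ, ∀ ω, Y n ω = max (-(((n : ℝ) + 1) ^ (1 / p))) (min (X ω) (((n : ℝ) + 1) ^ (1 / p))))
    (hbound : ∀ a : ℝ, 0 < a →
      sl.E (fun ω => max (|X ω| - a) 0) ≤ ∫ x in Set.Ioi a, upperCapacity sl {ω | |X ω| ≥ x})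
    (hChoquet : IntegrableOn (fun t => upperCapacity sl {ω | |X ω| ^ p ≥ t}) (Set.Ioi (0 : ℝ))) :
    Summable (fun n : ℕ => |sl.E (Y n)| / ((n : ℝ) + 1) ^ (1 / p)) ∧
      (∑' n : ℕ, |sl.E (Y n)| / ((n : ℝ) + 1) ^ (1 / p)) ≤
        1 / (p - 1) * ∫ t in Set.Ioi (0 : ℝ), upperCapacity sl {ω | |X ω| ^ p ≥ t} := by
  have hp0 : (0:ℝ) < p := by linarith
  have hq0 : (0:ℝ) < 1/p := by positivity
  have hq1 : 1/p < 1 := by rw [div_lt_one hp0]; exact hp1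
  set G : ℝ → ℝ := fun t => upperCapacity sl {ω | |X ω| ^ p ≥ t} with hGdef
  have hGnn : ∀ t, 0 ≤ G t := fun t => upperCapacity_nonneg sl _
  set θ : ℝ := 1 - 1/p with hθdef
  have hθ0 : 0 < θ := by simp only [hθdef]; linarith
  have hθ1 : θ ≤ 1 := by simp only [hθdef]; linarith
  -- the auxiliary integrands
  set f : ℕ → ℝ → ℝ := fun n =>
    (Set.Ioi ((n:ℝ)+1)).indicator
      (fun t => ((n:ℝ)+1)^(-(1/p)) * (1/p * t^(1/p-1) * G t)) with hfdef
  -- integrability of each f n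
  have hsub : ∀ n : ℕ, Set.Ioi ((n:ℝ)+1) ⊆ Set.Ioi (0:ℝ) :=
    fun n => Set.Ioi_subset_Ioi (by positivity)
  have hGn : ∀ n : ℕ, IntegrableOn G (Set.Ioi ((n:ℝ)+1)) :=
    fun n => hChoquet.mono_set (hsub n)
  have hg : ∀ n : ℕ, IntegrableOn (fun t => 1/p * t^(1/p-1) * G t) (Set.Ioi ((n:ℝ)+1)) := by
    intro n
    apply Integrable.mono (hGn n)
    · have hcont : ContinuousOn (fun t : ℝ => 1/p * t^(1/p-1)) (Set.Ioi ((n:ℝ)+1)) := by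
        apply ContinuousOn.mul continuousOn_const
        apply ContinuousOn.rpow_const continuousOn_id
        intro x hx
        left
        have : (0:ℝ) < x := lt_of_le_of_lt (by positivity) hx
        exact ne_of_gt this
      exact ((hcont.aestronglyMeasurable measurableSet_Ioi).mul (hGn n).1)
    · rw [ae_restrict_iff' measurableSet_Ioi]
      filter_upwards with t ht
      have h1t : (1:ℝ) ≤ t := by
        have := Set.mem_Ioi.mp ht
        have hn : (0:ℝ) ≤ (n:ℝ) := Nat.cast_nonneg n
        linarith
      have htp : t ^ (1/p-1) ≤ 1 :=
        Real.rpow_le_one_of_one_le_of_nonpos h1t (by linarith)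
      have htp0 : 0 ≤ t ^ (1/p-1) := Real.rpow_nonneg (by linarith) _
      have h1 : |1/p * t^(1/p-1) * G t| = (1/p * t^(1/p-1)) * |G t| := by
        rw [abs_mul, abs_of_nonneg (by positivity : (0:ℝ) ≤ 1/p * t^(1/p-1))]
      rw [Real.norm_eq_abs, Real.norm_eq_abs, h1]
      have : 1/p * t^(1/p-1) ≤ 1 := by nlinarith
      nlinarith [abs_nonneg (G t)]
  have hfint : ∀ n : ℕ, IntegrableOn (f n) (Set.Ioi (0:ℝ)) := by
    intro n
    exact (MeasureTheory.IntegrableOn.integrable_indicator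
      ((hg n).const_mul _) measurableSet_Ioi).integrableOn
  -- value of ∫ f n over Ioi 0
  have hfval : ∀ n : ℕ, ∫ t in Set.Ioi (0:ℝ), f n t
      = ((n:ℝ)+1)^(-(1/p)) * ∫ t in Set.Ioi ((n:ℝ)+1), (1/p * t^(1/p-1) * G t) := by
    intro n
    rw [hfdef]
    rw [setIntegral_indicator measurableSet_Ioi, Set.Ioi_inter_Ioi,
      sup_eq_right.mpr (by positivity : (0:ℝ) ≤ (n:ℝ)+1), integral_const_mul]
  -- key per-n estimate
  have key : ∀ n : ℕ, |sl.E (Y n)| / ((n:ℝ)+1)^(1/p) ≤ ∫ t in Set.Ioi (0:ℝ), f n t := by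
    intro n
    set c : ℝ := ((n:ℝ)+1)^(1/p) with hcdef
    have hc : 0 < c := Real.rpow_pos_of_pos (by positivity) _
    -- step A : |E (Y n)| ≤ E (max (|X| - c) 0)
    have hYX : ∀ ω, |Y n ω - X ω| = max (|X ω| - c) 0 := by
      intro ω
      rw [hY n ω]
      rcases le_total (X ω) (-c) with h1 | h1
      · rw [min_eq_left (by linarith), max_eq_left h1]
        rw [abs_of_nonpos (by linarith : X ω ≤ 0),
          abs_of_nonneg (by linarith : (0:ℝ) ≤ -c - X ω)]
        rw [max_eq_left (by linarith)]
        ring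
      · rcases le_total c (X ω) with h2 | h2
        · rw [min_eq_right h2, max_eq_right (by linarith : -c ≤ c)]
          rw [abs_of_nonpos (by linarith : c - X ω ≤ 0),
            abs_of_nonneg (by linarith : 0 ≤ X ω)]
          rw [max_eq_left (by linarith)]
          ring
        · rw [min_eq_left h2, max_eq_right h1]
          have habs : |X ω| ≤ c := abs_le.mpr ⟨h1, h2⟩
          rw [sub_self, abs_zero, max_eq_right (by linarith)]
    have hA : |sl.E (Y n)| ≤ sl.E (fun ω => max (|X ω| - c) 0) := by
      have heqf : (fun ω => max (|X ω| - c) 0) = fun ω => |Y n ω - X ω| := by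
        funext ω; rw [hYX ω]
      rw [heqf]
      rw [abs_le]
      constructor
      · have h2 := sl.subadd (Y n) (fun ω => X ω - Y n ω)
        have heq2 : (fun ω => Y n ω + (X ω - Y n ω)) = X := by funext ω; ring
        rw [heq2, hmean] at h2
        have h3 : sl.E (fun ω => X ω - Y n ω) ≤ sl.E (fun ω => |Y n ω - X ω|) := by
          apply sl.mono
          intro ω
          rw [abs_sub_comm]
          exact le_abs_self _
        linarith
      · have h1 := sl.subadd X (fun ω => Y n ω - X ω)
        have heq1 : (fun ω => X ω + (Y n ω - X ω)) = Y n := by funext ω; ring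
        rw [heq1, hmean, zero_add] at h1
        have h3 : sl.E (fun ω => Y n ω - X ω) ≤ sl.E (fun ω => |Y n ω - X ω|) :=
          sl.mono fun ω => le_abs_self _
        linarith
    -- step B : apply hbound
    have hB := hbound c hc
    -- step C : rewrite the capacity in terms of G
    have hC : ∫ x in Set.Ioi c, upperCapacity sl {ω | |X ω| ≥ x}
        = ∫ x in Set.Ioi c, G (x^p) := by
      apply setIntegral_congr_fun measurableSet_Ioi
      intro x hx
      have hx0 : (0:ℝ) < x := lt_trans hc hx
      simp only [hGdef]
      congr 1
      ext ω
      simp only [Set.mem_setOf_eq, ge_iff_le]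
      exact (Real.rpow_le_rpow_iff hx0.le (abs_nonneg _) hp0).symm
    -- step D : substitution x ↦ x^p
    have hcp : c ^ p = (n:ℝ)+1 := by
      rw [hcdef, ← Real.rpow_mul (by positivity : (0:ℝ) ≤ (n:ℝ)+1), one_div,
        inv_mul_cancel₀ hp0.ne', Real.rpow_one]
    have hD : ∫ x in Set.Ioi c, G (x^p)
        = ∫ t in Set.Ioi ((n:ℝ)+1), (1/p * t^(1/p-1) * G t) := by
      have hsubst := integral_comp_rpow_Ioi
        ((Set.Ioi ((n:ℝ)+1)).indicator (fun t => 1/p * t^(1/p-1) * G t)) (ne_of_gt hp0)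
      rw [setIntegral_indicator measurableSet_Ioi, Set.Ioi_inter_Ioi,
        sup_eq_right.mpr (by positivity : (0:ℝ) ≤ (n:ℝ)+1)] at hsubst
      rw [← hsubst]
      rw [show (Set.Ioi c : Set ℝ) = Set.Ioi 0 ∩ Set.Ioi c by
        rw [Set.Ioi_inter_Ioi, sup_eq_right.mpr hc.le]]
      rw [← setIntegral_indicator (measurableSet_Ioi : MeasurableSet (Set.Ioi c))]
      apply setIntegral_congr_fun measurableSet_Ioi
      intro x hx
      have hx0 : (0:ℝ) < x := hx
      have hiff : ((n:ℝ)+1 < x^p) ↔ c < x := by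
        rw [← hcp]
        exact Real.rpow_lt_rpow_iff hc.le hx0.le hp0
      simp only [Set.indicator_apply, Set.mem_Ioi, smul_eq_mul]
      by_cases hcx : c < x
      · rw [if_pos hcx, if_pos (hiff.mpr hcx), abs_of_pos hp0]
        have hxp1 : (x^p)^(1/p-1) = x^(1-p) := by
          rw [← Real.rpow_mul hx0.le, show p*(1/p-1) = 1-p by field_simp]
        rw [hxp1]
        have hxx : x^(p-1) * x^(1-p) = 1 := by
          rw [← Real.rpow_add hx0, show p-1+(1-p) = 0 by ring, Real.rpow_zero]
        have hgoal : p * x ^ (p-1) * (1/p * x^(1-p) * G (x^p))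
            = (p * (1/p)) * (x^(p-1) * x^(1-p)) * G (x^p) := by ring
        rw [hgoal, hxx, mul_one, mul_one_div, div_self hp0.ne', one_mul]
      · rw [if_neg hcx, if_neg (fun h => hcx (hiff.mp h)), mul_zero]
    -- put the steps together
    have hle : |sl.E (Y n)| ≤ ∫ t in Set.Ioi ((n:ℝ)+1), (1/p * t^(1/p-1) * G t) := by
      calc |sl.E (Y n)| ≤ sl.E (fun ω => max (|X ω| - c) 0) := hA
        _ ≤ ∫ x in Set.Ioi c, upperCapacity sl {ω | |X ω| ≥ x} := hB
        _ = ∫ x in Set.Ioi c, G (x^p) := hC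
        _ = ∫ t in Set.Ioi ((n:ℝ)+1), (1/p * t^(1/p-1) * G t) := hD
    rw [hfval n]
    rw [div_eq_inv_mul, ← Real.rpow_neg (by positivity : (0:ℝ) ≤ (n:ℝ)+1)]
    apply mul_le_mul_of_nonneg_left hle (le_of_lt (Real.rpow_pos_of_pos (by positivity) _))
  -- bound on partial sums
  have hsumle : ∀ N : ℕ, ∑ n ∈ Finset.range N, |sl.E (Y n)| / ((n:ℝ)+1)^(1/p)
      ≤ 1/(p-1) * ∫ t in Set.Ioi (0:ℝ), G t := by
    intro N
    have step1 : ∑ n ∈ Finset.range N, |sl.E (Y n)| / ((n:ℝ)+1)^(1/p)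
        ≤ ∑ n ∈ Finset.range N, ∫ t in Set.Ioi (0:ℝ), f n t :=
      Finset.sum_le_sum fun n _ => key n
    have step2 : ∑ n ∈ Finset.range N, ∫ t in Set.Ioi (0:ℝ), f n t
        = ∫ t in Set.Ioi (0:ℝ), ∑ n ∈ Finset.range N, f n t :=
      (integral_finset_sum _ fun n _ => hfint n).symm
    have step3 : ∫ t in Set.Ioi (0:ℝ), ∑ n ∈ Finset.range N, f n t
        ≤ ∫ t in Set.Ioi (0:ℝ), 1/(p-1) * G t := by
      apply setIntegral_mono_on
        (integrable_finset_sum _ fun n _ => hfint n) (hChoquet.const_mul _)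
        measurableSet_Ioi
      intro t ht
      have ht0 : (0:ℝ) < t := ht
      -- rewrite each f n t
      have hterm : ∀ n : ℕ, f n t
          = (if (n:ℝ)+1 < t then ((n:ℝ)+1)^(θ-1) else 0) * (1/p * t^(1/p-1) * G t) := by
        intro n
        rw [hfdef]
        simp only [Set.indicator_apply, Set.mem_Ioi]
        have : -(1/p) = θ - 1 := by rw [hθdef]; ring
        rw [this]
        split_ifs with h
        · ring
        · ring
      have hsum_eq : ∑ n ∈ Finset.range N, f n t
          = (∑ n ∈ Finset.range N, if (n:ℝ)+1 < t then ((n:ℝ)+1)^(θ-1) else 0)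
            * (1/p * t^(1/p-1) * G t) := by
        rw [Finset.sum_mul]
        exact Finset.sum_congr rfl fun n _ => hterm n
      rw [hsum_eq]
      set m : ℕ := Nat.floor t with hmdef
      have hS : (∑ n ∈ Finset.range N, if (n:ℝ)+1 < t then ((n:ℝ)+1)^(θ-1) else 0)
          ≤ (1/θ) * t^θ := by
        have hle1 : (∑ n ∈ Finset.range N, if (n:ℝ)+1 < t then ((n:ℝ)+1)^(θ-1) else 0)
            ≤ ∑ n ∈ Finset.range N, if n < m then ((n:ℝ)+1)^(θ-1) else 0 := by
          apply Finset.sum_le_sum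
          intro n _
          split_ifs with h1 h2
          · exact le_refl _
          · exfalso
            apply h2
            have : (n+1 : ℕ) ≤ m := Nat.le_floor (by push_cast; linarith)
            omega
          · positivity
          · exact le_refl _
        have hle2 : (∑ n ∈ Finset.range N, if n < m then ((n:ℝ)+1)^(θ-1) else 0)
            ≤ ∑ n ∈ Finset.range m, ((n:ℝ)+1)^(θ-1) := by
          rw [← Finset.sum_filter]
          apply Finset.sum_le_sum_of_subset_of_nonneg
          · intro n hn
            rw [Finset.mem_filter] at hn
            exact Finset.mem_range.mpr hn.2
          · intro n _ _
            positivity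
        have hle3 : ∑ n ∈ Finset.range m, ((n:ℝ)+1)^(θ-1) ≤ (1/θ) * (m:ℝ)^θ :=
          sum_rpow_le hθ0 hθ1 m
        have hle4 : (1/θ) * (m:ℝ)^θ ≤ (1/θ) * t^θ := by
          apply mul_le_mul_of_nonneg_left _ (by positivity)
          exact Real.rpow_le_rpow (Nat.cast_nonneg m) (Nat.floor_le ht0.le) hθ0.le
        linarith
      have hrest : 0 ≤ 1/p * t^(1/p-1) * G t := by
        have := hGnn t
        have h2 : (0:ℝ) ≤ t^(1/p-1) := Real.rpow_nonneg ht0.le _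
        positivity
      calc (∑ n ∈ Finset.range N, if (n:ℝ)+1 < t then ((n:ℝ)+1)^(θ-1) else 0)
            * (1/p * t^(1/p-1) * G t)
          ≤ ((1/θ) * t^θ) * (1/p * t^(1/p-1) * G t) :=
            mul_le_mul_of_nonneg_right hS hrest
        _ = 1/(p-1) * G t := by
            have h1 : t^θ * t^(1/p-1) = 1 := by
              rw [← Real.rpow_add ht0, show θ + (1/p-1) = 0 by rw [hθdef]; ring,
                Real.rpow_zero]
            have hθp : θ * p = p - 1 := by
              rw [hθdef, show (1 - 1/p) * p = p - (1/p * p) by ring, one_div,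
                inv_mul_cancel₀ hp0.ne']
            have h2 : ((1/θ) * t^θ) * (1/p * t^(1/p-1) * G t)
                = (1/(θ*p)) * (t^θ * t^(1/p-1)) * G t := by
              rw [one_div, one_div, one_div, mul_inv]; ring
            rw [h2, h1, hθp, mul_one]
    have step4 : ∫ t in Set.Ioi (0:ℝ), 1/(p-1) * G t
        = 1/(p-1) * ∫ t in Set.Ioi (0:ℝ), G t := integral_const_mul _ _
    linarith
  have hnn : ∀ n : ℕ, 0 ≤ |sl.E (Y n)| / ((n:ℝ)+1)^(1/p) := fun n => by positivity
  exact ⟨summable_of_sum_range_le hnn hsumle,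
    Real.tsum_le_of_sum_range_le hnn hsumle⟩
end
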